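/- Let Λ be a compact metric space, f : Λ → Λ continuous, and suppose that the closure of the set of periodic measures equals M_f(Λ) and that M_f(Λ) is compact and connected in the weak* topology. Then there exists a sequence of closed balls B_n ⊆ M_f(Λ) with centers periodic measures Y_n and radii ε_n → 0 such that B_n ∩ B_{n+1} ≠ ∅ and ⋂_{N≥1} ⋃_{n≥N} B_n = M_f(Λ). -/

import Mathlib

open MeasureTheory Filter Topology
open scoped ENNReal NNReal

variable {Λ : Type*}

/-- Empirical measure `(1/(N+1)) ∑_{j=0}^{N} δ_{f^j y}` (this indexing realizes the
sequence `μ_N` for `N ≥ 1`). -/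
noncomputable def empP [MetricSpace Λ] [MeasurableSpace Λ] [BorelSpace Λ]
    (f : Λ → Λ) (y : Λ) (N : ℕ) : ProbabilityMeasure Λ :=
  ⟨((N + 1 : ℕ) : ℝ≥0∞)⁻¹ • ∑ j ∈ Finset.range (N + 1), Measure.dirac (f^[j] y), by
    constructor
    simp [Measure.smul_apply, ENNReal.inv_mul_cancel]⟩

/-- `V_f(y)`: the set of weak* accumulation points of the empirical measures of `y`. -/
def accPts [MetricSpace Λ] [MeasurableSpace Λ] [BorelSpace Λ] (f : Λ → Λ) (y : Λ) :
    Set (ProbabilityMeasure Λ) :=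
  {μ | MapClusterPt μ atTop (empP f y)}

/-- `M_f(Λ)`: the set of `f`-invariant Borel probability measures. -/
def invProb [MetricSpace Λ] [MeasurableSpace Λ] [BorelSpace Λ] (f : Λ → Λ) :
    Set (ProbabilityMeasure Λ) :=
  {μ | (μ : Measure Λ).map f = μ}

/-- The periodic measure of a periodic point `x` of period `k ≥ 1`. -/
noncomputable def perP [MetricSpace Λ] [MeasurableSpace Λ] [BorelSpace Λ]
    (f : Λ → Λ) (x : Λ) (k : ℕ) (hk : 0 < k) : ProbabilityMeasure Λ :=
  ⟨((k : ℕ) : ℝ≥0∞)⁻¹ • ∑ i ∈ Finset.range k, Measure.dirac (f^[i] x), by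
    constructor
    simp [Measure.smul_apply, ENNReal.inv_mul_cancel, hk.ne']⟩

open Metric

/-!
Metrize the weak* topology and let `P` be the set of periodic measures, so `M_f(Λ) = closure P`
is compact and connected. Connectedness makes any two points of `P` joinable by chains in `P`
with steps shorter than any `δ > 0`, and compactness gives finite `δ`-nets inside `P`. Listing
the nets for `δ = 1/(m+1)` one after the other and joining consecutive net points by chains of
the corresponding mesh yields the centers `Y_n`; the radius at a center is the mesh of the net
being traversed.
-/

/-- `blockPos ℓ n = (m, i)`: the `n`-th term of a concatenation of blocks of lengths
`ℓ 0, ℓ 1, …` is the `i`-th term of block `m`. -/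
def blockPos (ℓ : ℕ → ℕ) : ℕ → ℕ × ℕ
  | 0 => (0, 0)
  | n + 1 =>
    let p := blockPos ℓ n
    if p.2 + 1 < ℓ p.1 then (p.1, p.2 + 1) else (p.1 + 1, 0)

namespace blockPos

open Finset

variable {ℓ : ℕ → ℕ}

lemma snd_lt (hℓ : ∀ m, 0 < ℓ m) : ∀ n, (blockPos ℓ n).2 < ℓ (blockPos ℓ n).1
  | 0 => hℓ 0
  | n + 1 => by
    simp only [blockPos]
    split_ifs with h
    exacts [h, hℓ _]

lemma fst_le (n : ℕ) : (blockPos ℓ n).1 ≤ n := by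
  induction n with
  | zero => rfl
  | succ n ih =>
    simp only [blockPos]
    split_ifs <;> dsimp only <;> omega

lemma monotone_fst : Monotone fun n => (blockPos ℓ n).1 :=
  monotone_nat_of_le_succ fun n => by
    simp only [blockPos]
    split_ifs <;> dsimp only <;> omega

lemma sum_range_add (hℓ : ∀ m, 0 < ℓ m) : ∀ m i, i < ℓ m → blockPos ℓ (∑ j ∈ range m, ℓ j + i) = (m, i)
  | 0, 0, _ => rfl
  | m + 1, 0, _ => by
    have hm := hℓ m
    have h := sum_range_add hℓ m (ℓ m - 1) (by omega)
    rw [sum_range_succ, show ∑ j ∈ range m, ℓ j + ℓ m + 0 = ∑ j ∈ range m, ℓ j + (ℓ m - 1) + 1 by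
      omega, blockPos, h]
    simp only [Nat.sub_add_cancel hm, lt_irrefl, if_false]
  | m, i + 1, hi => by
    rw [← add_assoc, blockPos, sum_range_add hℓ m i (by omega)]
    simp only [hi, if_true]

lemma tendsto_fst (hℓ : ∀ m, 0 < ℓ m) : Tendsto (fun n => (blockPos ℓ n).1) atTop atTop :=
  tendsto_atTop_atTop_of_monotone monotone_fst fun m =>
    ⟨∑ j ∈ range m, ℓ j + 0, by rw [sum_range_add hℓ m 0 (hℓ m)]⟩

lemma frequently (hℓ : ∀ m, 0 < ℓ m) {Q : ℕ → ℕ → Prop}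
    (h : ∃ᶠ m in atTop, ∃ i < ℓ m, Q m i) :
    ∃ᶠ n in atTop, Q (blockPos ℓ n).1 (blockPos ℓ n).2 := by
  refine frequently_atTop.2 fun N => ?_
  obtain ⟨m, hNm, i, hi, hQ⟩ := frequently_atTop.1 h N
  have hpos := sum_range_add hℓ m i hi
  refine ⟨∑ j ∈ range m, ℓ j + i, ?_, by rwa [hpos]⟩
  calc N ≤ m := hNm
    _ = (blockPos ℓ (∑ j ∈ range m, ℓ j + i)).1 := by rw [hpos]
    _ ≤ _ := fst_le _

lemma apply_succ (hℓ : ∀ m, 0 < ℓ m) {α : Type*} {c : ℕ → ℕ → α}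
    (hc : ∀ m, c (m + 1) 0 = c m (ℓ m)) (n : ℕ) :
    c (blockPos ℓ (n + 1)).1 (blockPos ℓ (n + 1)).2 =
      c (blockPos ℓ n).1 ((blockPos ℓ n).2 + 1) := by
  have h := snd_lt hℓ n
  simp only [blockPos]
  split_ifs with h'
  · rfl
  · rw [hc, show (blockPos ℓ n).2 + 1 = ℓ (blockPos ℓ n).1 by omega]

end blockPos

lemma Relation.ReflTransGen.exists_walk {α : Type*} {r : α → α → Prop} {a b : α}
    (h : Relation.ReflTransGen r a b) (hb : r b b) :
    ∃ L > 0, ∃ w : ℕ → α, w 0 = a ∧ w L = b ∧ ∀ i < L, r (w i) (w (i + 1)) := by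
  induction h using Relation.ReflTransGen.head_induction_on with
  | refl => exact ⟨1, one_pos, fun _ => b, rfl, rfl, fun _ _ => hb⟩
  | head hac _ ih =>
    obtain ⟨L, hL, w, hw0, hwL, hw⟩ := ih
    refine ⟨L + 1, L.succ_pos, fun | 0 => _ | i + 1 => w i, rfl, hwL, ?_⟩
    rintro (_ | i) hi
    · exact (show r _ (w 0) by rwa [hw0])
    · exact hw i (by omega)

variable {X : Type*} [PseudoMetricSpace X] {P : Set X}

lemma IsPreconnected.reflTransGen_dist_lt (hconn : IsPreconnected (closure P)) {δ : ℝ}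
    (hδ : 0 < δ) {a b : X} (ha : a ∈ P) (hb : b ∈ P) :
    Relation.ReflTransGen (fun p q => p ∈ P ∧ q ∈ P ∧ dist p q < δ) a b := by
  -- Compare points of `closure P` through all their approximants in `P`: this makes `R`
  -- transitive, because the middle point always has an approximant.
  let R x y := ∀ p ∈ P, ∀ q ∈ P, dist p x < δ / 3 → dist y q < δ / 3 →
    Relation.ReflTransGen (fun p q => p ∈ P ∧ q ∈ P ∧ dist p q < δ) p q
  have hlocal : ∀ x y, dist x y < δ / 3 → R x y := fun x y hxy p hp q hq hpx hyq =>
    .single ⟨hp, hq, by linarith [dist_triangle4 p x y q]⟩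
  have htrans : ∀ x y z, y ∈ closure P → R x y → R y z → R x z := by
    intro x y z hy hxy hyz p hp r hr hpx hzr
    obtain ⟨q, hq, hyq⟩ := mem_closure_iff.1 hy (δ / 3) (by positivity)
    exact (hxy p hp q hq hpx hyq).trans (hyz q hq r hr (by rwa [dist_comm]) hzr)
  refine hconn.induction₂' R (fun x _ => ?_) (fun x y z _ hy _ => htrans x y z hy)
    (subset_closure ha) (subset_closure hb) a ha b hb (by simpa using hδ) (by simpa using hδ)
  filter_upwards [mem_nhdsWithin_of_mem_nhds (ball_mem_nhds x (by positivity : 0 < δ / 3))]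
    with y hy
  exact ⟨hlocal x y (by rwa [dist_comm]), hlocal y x hy⟩

lemma IsCompact.exists_finite_net (hcomp : IsCompact (closure P)) (hne : P.Nonempty) {δ : ℝ}
    (hδ : 0 < δ) :
    ∃ N, ∃ c : ℕ → P, ∀ s ∈ closure P, ∃ i < N, dist s (c i) < δ := by
  obtain ⟨t, ht⟩ := hcomp.elim_finite_subcover (fun p : P => ball (p : X) δ)
    (fun _ => isOpen_ball) fun s hs =>
      let ⟨p, hp, hsp⟩ := mem_closure_iff.1 hs δ hδ
      Set.mem_iUnion.2 ⟨⟨p, hp⟩, hsp⟩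
  refine ⟨t.toList.length, fun i => t.toList.getD i ⟨_, hne.some_mem⟩, fun s hs => ?_⟩
  obtain ⟨p, hpt, hsp⟩ := Set.mem_iUnion₂.1 (ht hs)
  obtain ⟨i, hi, rfl⟩ := List.mem_iff_getElem.1 (Finset.mem_toList.2 hpt)
  exact ⟨i, hi, by simpa only [List.getD_eq_getElem _ _ hi, mem_ball] using hsp⟩

lemma IsCompact.exists_seq_frequently_dist_lt (hcomp : IsCompact (closure P)) (hne : P.Nonempty) :
    ∃ (q : ℕ → P) (η : ℕ → ℝ), Tendsto η atTop (𝓝 0) ∧ (∀ k, 0 < η k) ∧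
      ∀ s ∈ closure P, ∃ᶠ k in atTop, dist s (q k) < η k := by
  choose N c hc using fun m : ℕ => hcomp.exists_finite_net hne (Nat.one_div_pos_of_nat (n := m))
  have hN : ∀ m, 0 < N m := fun m =>
    let ⟨_, hi, _⟩ := hc m _ (subset_closure hne.some_mem); Nat.zero_lt_of_lt hi
  refine ⟨fun k => c (blockPos N k).1 (blockPos N k).2, fun k => 1 / ((blockPos N k).1 + 1),
    tendsto_one_div_add_atTop_nhds_zero_nat.comp (blockPos.tendsto_fst hN),
    fun k => Nat.one_div_pos_of_nat, fun s hs => ?_⟩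
  exact blockPos.frequently hN (Frequently.of_forall fun m => hc m s hs)

lemma exists_chain_of_closedBalls (hcomp : IsCompact (closure P))
    (hconn : IsPreconnected (closure P)) (hne : P.Nonempty) :
    ∃ (Y : ℕ → X) (ε : ℕ → ℝ), (∀ n, Y n ∈ P) ∧ Tendsto ε atTop (𝓝 0) ∧ (∀ n, 0 < ε n) ∧
      (∀ n, Y (n + 1) ∈ closedBall (Y n) (ε n)) ∧
      ∀ s ∈ closure P, ∃ᶠ n in atTop, s ∈ closedBall (Y n) (ε n) := by
  obtain ⟨q, η, hη, hηpos, hq⟩ := hcomp.exists_seq_frequently_dist_lt hne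
  have hwalk k := (hconn.reflTransGen_dist_lt (hηpos k) (q k).2 (q (k + 1)).2).exists_walk
    ⟨(q (k + 1)).2, (q (k + 1)).2, by simpa using hηpos k⟩
  choose L hL w hw0 hwL hw using hwalk
  have hjoin : ∀ k, w (k + 1) 0 = w k (L k) := fun k => by rw [hw0, hwL]
  have hstep n := hw _ _ (blockPos.snd_lt hL n)
  refine ⟨fun n => w (blockPos L n).1 (blockPos L n).2, fun n => η (blockPos L n).1,
    fun n => (hstep n).1, hη.comp (blockPos.tendsto_fst hL), fun n => hηpos _, fun n => ?_,
    fun s hs => ?_⟩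
  · simp only [mem_closedBall]
    rw [dist_comm, blockPos.apply_succ hL hjoin]
    exact (hstep n).2.2.le
  · refine blockPos.frequently (Q := fun k j => s ∈ closedBall (w k j) (η k)) hL
      ((hq s hs).mono fun k hk => ⟨0, hL k, ?_⟩)
    rw [mem_closedBall, hw0]
    exact hk.le

theorem chain_of_balls_from_dense_periodic_measures_general
    [MetricSpace Λ] [CompactSpace Λ] [MeasurableSpace Λ] [BorelSpace Λ]
    (f : Λ → Λ)
    (hdense : closure {μ : ProbabilityMeasure Λ |
        ∃ x : Λ, ∃ k : ℕ, ∃ hk : 0 < k, f^[k] x = x ∧ μ = perP f x k hk} = invProb f)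
    (hcomp : IsCompact (invProb f)) (hconn : IsConnected (invProb f)) :
    ∃ dm : MetricSpace (ProbabilityMeasure Λ),
      dm.toUniformSpace.toTopologicalSpace =
        (inferInstance : TopologicalSpace (ProbabilityMeasure Λ)) ∧
      ∃ (Y : ℕ → ProbabilityMeasure Λ) (ε : ℕ → ℝ),
        (∀ n, ∃ x : Λ, ∃ k : ℕ, ∃ hk : 0 < k, f^[k] x = x ∧ Y n = perP f x k hk) ∧
        Tendsto ε atTop (nhds 0) ∧
        (∀ n, (0 : ℝ) < ε n) ∧
        (∀ n, (@Metric.closedBall _ dm.toPseudoMetricSpace (Y n) (ε n) ∩ invProb f)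
            ⊆ invProb f) ∧
        (∀ n, ((@Metric.closedBall _ dm.toPseudoMetricSpace (Y n) (ε n) ∩ invProb f) ∩
            (@Metric.closedBall _ dm.toPseudoMetricSpace (Y (n+1)) (ε (n+1)) ∩
              invProb f)).Nonempty) ∧
        (⋂ N : ℕ, ⋃ n ∈ {n : ℕ | N ≤ n},
            (@Metric.closedBall _ dm.toPseudoMetricSpace (Y n) (ε n) ∩ invProb f))
          = invProb f := by
  let dm : MetricSpace (ProbabilityMeasure Λ) := TopologicalSpace.metrizableSpaceMetric _
  set P := {μ : ProbabilityMeasure Λ |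
    ∃ x : Λ, ∃ k : ℕ, ∃ hk : 0 < k, f^[k] x = x ∧ μ = perP f x k hk}
  have hclosure : closure P = invProb f := hdense
  have hne : P.Nonempty := closure_nonempty_iff.1 (hclosure ▸ hconn.nonempty)
  obtain ⟨Y, ε, hYP, hε, hεpos, hstep, hfreq⟩ :=
    exists_chain_of_closedBalls (hclosure ▸ hcomp) (hclosure ▸ hconn.isPreconnected) hne
  have hPM : P ⊆ invProb f := hclosure ▸ subset_closure
  refine ⟨dm, rfl, Y, ε, hYP, hε, hεpos, fun _ => Set.inter_subset_right,
    fun n => ⟨Y (n + 1), ⟨hstep n, hPM (hYP _)⟩, mem_closedBall_self (hεpos _).le, hPM (hYP _)⟩,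
    Set.Subset.antisymm ((Set.iInter_subset _ 0).trans
      (Set.iUnion₂_subset fun _ _ => Set.inter_subset_right)) fun μ hμ => Set.mem_iInter.2 fun N => ?_⟩
  obtain ⟨n, hNn, hμn⟩ := frequently_atTop.1 (hfreq μ (hclosure ▸ hμ)) N
  exact Set.mem_biUnion hNn ⟨hμn, hμ⟩

/-- if the periodic measures are dense in `M_f(Λ)` and `M_f(Λ)` is
compact and connected in the weak* topology, then (for some metric compatible with
the weak* topology) there is a chain of closed balls `B_n ⊆ M_f(Λ)` centered at
periodic measures `Y_n` with radii `ε_n → 0` such that consecutive balls intersect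
and `⋂_N ⋃_{n ≥ N} B_n = M_f(Λ)`. -/
theorem chain_of_balls_from_dense_periodic_measures
    [MetricSpace Λ] [CompactSpace Λ] [MeasurableSpace Λ] [BorelSpace Λ]
    (f : Λ → Λ) (hf : Continuous f)
    (hdense : closure {μ : ProbabilityMeasure Λ |
        ∃ x : Λ, ∃ k : ℕ, ∃ hk : 0 < k, f^[k] x = x ∧ μ = perP f x k hk} = invProb f)
    (hcomp : IsCompact (invProb f)) (hconn : IsConnected (invProb f)) :
    ∃ dm : MetricSpace (ProbabilityMeasure Λ),
      dm.toUniformSpace.toTopologicalSpace =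
        (inferInstance : TopologicalSpace (ProbabilityMeasure Λ)) ∧
      ∃ (Y : ℕ → ProbabilityMeasure Λ) (ε : ℕ → ℝ),
        (∀ n, ∃ x : Λ, ∃ k : ℕ, ∃ hk : 0 < k, f^[k] x = x ∧ Y n = perP f x k hk) ∧
        Tendsto ε atTop (nhds 0) ∧
        (∀ n, (0 : ℝ) < ε n) ∧
        (∀ n, (@Metric.closedBall _ dm.toPseudoMetricSpace (Y n) (ε n) ∩ invProb f)
            ⊆ invProb f) ∧
        (∀ n, ((@Metric.closedBall _ dm.toPseudoMetricSpace (Y n) (ε n) ∩ invProb f) ∩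
            (@Metric.closedBall _ dm.toPseudoMetricSpace (Y (n+1)) (ε (n+1)) ∩
              invProb f)).Nonempty) ∧
        (⋂ N : ℕ, ⋃ n ∈ {n : ℕ | N ≤ n},
            (@Metric.closedBall _ dm.toPseudoMetricSpace (Y n) (ε n) ∩ invProb f))
          = invProb f :=
  chain_of_balls_from_dense_periodic_measures_general f hdense hcomp hconn
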